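/- arXiv:1503.02241 — 6 statements merged into one kernel-verified Lean document; each statement's English description precedes it below -/
import Mathlib

section
/- Let (A, ≺) be a countable, very well founded partially ordered set and let c : ℕ → ℕ be a sequence in which every natural number appears infinitely often. Fix a bijection h : ℕ → A. Define a process that builds a sequence by, at step n, appending h(c n) to the output sequence if and only if h(c n) has not yet been appended and all ≺-predecessors of h(c n) have already been appended. Then every element of A is eventually appended to the output sequence. -/
/-!
Counting predecessors shows that `r` is well founded, so we argue by `r`-induction. If every
predecessor of `a` is appended at some stage, the finitely many of them are all appended by a
common stage `N`; any step `n ≥ N` at which `h (c n) = a` then appends `a` unless it is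
already there.
-/

def greedySet {A : Type*} (r : A → A → Prop) (h : ℕ → A) (c : ℕ → ℕ) : ℕ → Set A
  | 0 => ∅
  | n + 1 =>
      greedySet r h c n ∪
        {a | a = h (c n) ∧ a ∉ greedySet r h c n ∧ ∀ b, r b a → b ∈ greedySet r h c n}

theorem IsStrictOrder.wellFounded_of_finite_predecessors {α : Type*} {r : α → α → Prop}
    [IsStrictOrder α r] (hfin : ∀ a, {b | r b a}.Finite) : WellFounded r := by
  refine Subrelation.wf (fun {b a} hba => ?_) (measure fun a => {x | r x a}.ncard).wf
  refine Set.ncard_lt_ncard ⟨fun x hxb => _root_.trans hxb hba, fun hsub => ?_⟩ (hfin a)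
  exact irrefl b (hsub hba)

section GreedySet

variable {A : Type*} (r : A → A → Prop) (h : ℕ → A) (c : ℕ → ℕ)

theorem greedySet_monotone : Monotone (greedySet r h c) :=
  monotone_nat_of_le_succ fun _ => Set.subset_union_left

theorem mem_greedySet_succ_of_predecessors_mem {n : ℕ}
    (hpred : ∀ b, r b (h (c n)) → b ∈ greedySet r h c n) :
    h (c n) ∈ greedySet r h c (n + 1) := by
  by_cases hmem : h (c n) ∈ greedySet r h c n
  · exact Set.subset_union_left hmem
  · exact Or.inr ⟨rfl, hmem, hpred⟩

theorem exists_predecessors_subset_greedySet {a : A} (hfin : {b | r b a}.Finite)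
    (hpred : ∀ b, r b a → ∃ n, b ∈ greedySet r h c n) :
    ∃ N, ∀ b, r b a → b ∈ greedySet r h c N := by
  have hcover : (hfin.toFinset : Set A) ⊆ ⋃ n, greedySet r h c n := fun b hb =>
    Set.mem_iUnion.2 (hpred b (hfin.mem_toFinset.1 hb))
  obtain ⟨N, hN⟩ :=
    (greedySet_monotone r h c).directed_le.exists_mem_subset_of_finset_subset_biUnion hcover
  exact ⟨N, fun b hb => hN (hfin.mem_toFinset.2 hb)⟩

end GreedySet

theorem greedy_process_total_general {A : Type*} (r : A → A → Prop)
    (hpo : IsStrictOrder A r)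
    (hwf : ∀ a : A, {b : A | r b a}.Finite)
    (h : ℕ → A) (hbij : Function.Bijective h)
    (c : ℕ → ℕ) (hc : ∀ k N : ℕ, ∃ n ≥ N, c n = k) :
    ∀ a : A, ∃ n : ℕ, a ∈ greedySet r h c n := by
  intro a
  induction a using (hpo.wellFounded_of_finite_predecessors hwf).induction with
  | _ a ih =>
    obtain ⟨N, hN⟩ := exists_predecessors_subset_greedySet r h c (hwf a) ih
    obtain ⟨k, rfl⟩ := hbij.surjective a
    obtain ⟨n, hnN, rfl⟩ := hc k N
    exact ⟨n + 1, mem_greedySet_succ_of_predecessors_mem r h c fun b hb =>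
      greedySet_monotone r h c hnN (hN b hb)⟩

/-- For a countable, very well founded partially ordered set `(A, r)`, a bijection
`h : ℕ → A` and a sequence `c : ℕ → ℕ` in which every natural number appears infinitely
often, the greedy process appends every element of `A` eventually. -/
theorem greedy_process_total {A : Type*} [Countable A] (r : A → A → Prop)
    (hpo : IsStrictOrder A r)
    (hwf : ∀ a : A, {b : A | r b a}.Finite)
    (h : ℕ → A) (hbij : Function.Bijective h)
    (c : ℕ → ℕ) (hc : ∀ k N : ℕ, ∃ n ≥ N, c n = k) :
    ∀ a : A, ∃ n : ℕ, a ∈ greedySet r h c n :=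
  greedy_process_total_general r hpo hwf h hbij c hc
end

section
/- Let (E, ≼) be a partially ordered set of 'events' partitioned into sets K₀, K₁, K₂, … (indexed by views) with distinguished finite subsets Gᵢ ⊆ Kᵢ, such that: (a) if e ≼ f with e ∈ Kᵢ and f ∈ Kⱼ then i ≤ j; (b) elements of Gᵢ and Gⱼ with a strict relation g ≺ g' and g ∈ Gᵢ, g' ∈ Gⱼ satisfy i < j; and (c) the order is very well founded (each element has finitely many predecessors). Then there exists a timestamp function t : E → ℝ satisfying: (1) e ≺ f implies t(e) < t(f); (2) t(g) = i for every g ∈ Gᵢ; (3) for every real r, the set {e ∈ E | t(e) < r} is finite. -/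
/-!
An event of `G i` gets time `i`. Any other event `e` gets time `n - 1 / (w e + 2)`, where `n`
is the least index of a distinguished event above `e`, capped at `w e`. The weight `w` is a
strictly monotone `ℕ`-valued function with finite sublevel sets that dominates the view index:
sum `enc + 1` over `e` and its finitely many predecessors, for an enumeration `enc` of `E`.
Domination puts the cap above the index of every distinguished event below `e`; the offset
shrinks along the order, which keeps the times strictly monotone; and the cap leaves only
finitely many events below any given time.
-/

open Set

theorem one_div_nat_add_two_lt_one (n : ℕ) : 1 / ((n : ℝ) + 2) < 1 := by
  rw [div_lt_one (by positivity)]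
  linarith [n.cast_nonneg (α := ℝ)]

section Weight

variable {E : Type*} [Preorder E]

theorem exists_strictMono_nat_ge (hc : ∀ e : E, (Iio e).Finite) (c : E → ℕ) :
    ∃ w : E → ℕ, StrictMono w ∧ ∀ e, c e ≤ w e := by
  classical
  let S : E → Finset E := fun e => insert e (hc e).toFinset
  have hS : ∀ {e f : E}, e < f → S e ⊆ S f := by
    intro e f hef x hx
    simp only [S, Finset.mem_insert, Finite.mem_toFinset, mem_Iio] at hx ⊢
    rcases hx with rfl | hx
    exacts [Or.inr hef, Or.inr (hx.trans hef)]
  refine ⟨fun e => ∑ x ∈ S e, (c x + 1), fun e f hef => ?_, fun e => ?_⟩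
  · refine Finset.sum_lt_sum_of_subset (hS hef) (i := f) (Finset.mem_insert_self _ _) ?_
      (Nat.succ_pos _) fun _ _ _ => Nat.zero_le _
    simp only [S, Finset.mem_insert, Finite.mem_toFinset, mem_Iio, not_or]
    exact ⟨hef.ne', hef.not_gt⟩
  · exact (Nat.le_succ _).trans (Finset.single_le_sum (f := fun x => c x + 1)
      (fun _ _ => Nat.zero_le _) (Finset.mem_insert_self e _))

theorem exists_strictMono_nat_ge_finite_sublevels [Countable E] (hc : ∀ e : E, (Iio e).Finite)
    (c : E → ℕ) :
    ∃ w : E → ℕ, StrictMono w ∧ (∀ e, c e ≤ w e) ∧ ∀ n, {e | w e ≤ n}.Finite := by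
  obtain ⟨enc, henc⟩ := Countable.exists_injective_nat E
  obtain ⟨w, hw, hcw⟩ := exists_strictMono_nat_ge hc (c + enc)
  refine ⟨w, hw, fun e => le_of_add_le_left (hcw e), fun n => ?_⟩
  refine ((finite_Iic n).preimage henc.injOn).subset fun e he => ?_
  exact (le_of_add_le_right (hcw e)).trans he

end Weight

section Timestamp

variable {E : Type*} [Preorder E] (G : ℕ → Set E) (v w : E → ℕ)

def indicesAbove (e : E) : Set ℕ := {j | ∃ g ∈ G j, e < g}

noncomputable def nextIndex (e : E) : ℕ := sInf (insert (w e) (indicesAbove G e))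

open Classical in
noncomputable def timestamp (e : E) : ℝ :=
  if e ∈ G (v e) then v e else nextIndex G w e - 1 / (w e + 2)

variable {G v w}

theorem nextIndex_mem (e : E) : nextIndex G w e ∈ insert (w e) (indicesAbove G e) :=
  Nat.sInf_mem (insert_nonempty _ _)

theorem nextIndex_le {e g : E} {j : ℕ} (hg : g ∈ G j) (heg : e < g) : nextIndex G w e ≤ j :=
  Nat.sInf_le (mem_insert_of_mem _ ⟨g, hg, heg⟩)

theorem nextIndex_le_nextIndex (hw : StrictMono w) {e f : E} (hef : e < f) :
    nextIndex G w e ≤ nextIndex G w f := by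
  have hlower : ∀ n ∈ insert (w f) (indicesAbove G f), nextIndex G w e ≤ n := by
    rintro n (rfl | ⟨g, hg, hfg⟩)
    · exact (Nat.sInf_le (mem_insert _ _)).trans (hw hef).le
    · exact nextIndex_le hg (hef.trans hfg)
  exact hlower _ (nextIndex_mem f)

theorem lt_nextIndex (hb : ∀ {g g' : E} {i j : ℕ}, g < g' → g ∈ G i → g' ∈ G j → i < j)
    {e g : E} {i : ℕ} (hi : i < w e) (hg : g ∈ G i) (hge : g < e) : i < nextIndex G w e := by
  rcases nextIndex_mem (G := G) e with he | ⟨g', hg', heg'⟩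
  · rwa [he]
  · exact hb (hge.trans heg') hg hg'

theorem timestamp_of_mem (hv : ∀ i, ∀ g ∈ G i, v g = i) {g : E} {i : ℕ} (hg : g ∈ G i) :
    timestamp G v w g = i := by
  rw [timestamp, hv i g hg, if_pos hg]

theorem timestamp_of_not_mem {e : E} (he : e ∉ G (v e)) :
    timestamp G v w e = nextIndex G w e - 1 / ((w e : ℝ) + 2) := by
  rw [timestamp, if_neg he]

theorem lt_timestamp (hb : ∀ {g g' : E} {i j : ℕ}, g < g' → g ∈ G i → g' ∈ G j → i < j)
    (hw : StrictMono w) (hvw : ∀ e, v e ≤ w e) (hv : ∀ i, ∀ g ∈ G i, v g = i)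
    {e g : E} {i : ℕ} (he : e ∉ G (v e)) (hg : g ∈ G i) (hge : g < e) :
    (i : ℝ) < timestamp G v w e := by
  have hi : i < w e := (hv i g hg ▸ hvw g).trans_lt (hw hge)
  have : (i : ℝ) + 1 ≤ nextIndex G w e := by exact_mod_cast lt_nextIndex hb hi hg hge
  rw [timestamp_of_not_mem he]
  linarith [one_div_nat_add_two_lt_one (w e)]

theorem timestamp_lt {e g : E} {j : ℕ} (he : e ∉ G (v e)) (hg : g ∈ G j) (heg : e < g) :
    timestamp G v w e < j := by
  have : (nextIndex G w e : ℝ) ≤ j := by exact_mod_cast nextIndex_le hg heg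
  rw [timestamp_of_not_mem he]
  linarith [show 0 < 1 / ((w e : ℝ) + 2) by positivity]

theorem timestamp_strictMono
    (hb : ∀ {g g' : E} {i j : ℕ}, g < g' → g ∈ G i → g' ∈ G j → i < j)
    (hw : StrictMono w) (hvw : ∀ e, v e ≤ w e) (hv : ∀ i, ∀ g ∈ G i, v g = i) :
    StrictMono (timestamp G v w) := by
  intro e f hef
  by_cases he : e ∈ G (v e) <;> by_cases hf : f ∈ G (v f)
  · rw [timestamp_of_mem hv he, timestamp_of_mem hv hf]
    exact_mod_cast hb hef he hf
  · rw [timestamp_of_mem hv he]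
    exact lt_timestamp hb hw hvw hv hf he hef
  · rw [timestamp_of_mem hv hf]
    exact timestamp_lt he hf hef
  · have hnext : (nextIndex G w e : ℝ) ≤ nextIndex G w f := by
      exact_mod_cast nextIndex_le_nextIndex hw hef
    have hweight : 1 / ((w f : ℝ) + 2) < 1 / ((w e : ℝ) + 2) :=
      one_div_lt_one_div_of_lt (by positivity) (by exact_mod_cast Nat.add_lt_add_right (hw hef) 2)
    rw [timestamp_of_not_mem he, timestamp_of_not_mem hf]
    linarith

theorem finite_timestamp_lt (hGfin : ∀ i, (G i).Finite) (hc : ∀ e : E, (Iio e).Finite)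
    (hwfin : ∀ n, {e | w e ≤ n}.Finite) (r : ℝ) : {e | timestamp G v w e < r}.Finite := by
  obtain ⟨N, hN⟩ := exists_nat_gt r
  refine (((finite_Iic N).biUnion fun i _ => hGfin i).union
    ((hwfin N).union ((finite_Iic N).biUnion fun i _ =>
      (hGfin i).biUnion fun g _ => hc g))).subset fun e (he : timestamp G v w e < r) => ?_
  by_cases hG : e ∈ G (v e)
  · rw [timestamp, if_pos hG] at he
    have : v e ≤ N := by exact_mod_cast (he.trans hN).le
    exact Or.inl (mem_biUnion this hG)
  · rw [timestamp_of_not_mem hG] at he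
    have : nextIndex G w e ≤ N := by
      have : (nextIndex G w e : ℝ) < N + 1 := by linarith [one_div_nat_add_two_lt_one (w e)]
      exact Nat.lt_add_one_iff.mp (by exact_mod_cast this)
    rcases nextIndex_mem (G := G) (w := w) e with hcap | ⟨g, hg, heg⟩
    · exact Or.inr (Or.inl (show w e ≤ N by rwa [← hcap]))
    · exact Or.inr (Or.inr (mem_biUnion ((nextIndex_le hg heg).trans this) (mem_biUnion hg heg)))

end Timestamp

theorem timeline_exists_general {E : Type*} [Countable E] [Preorder E]
    (K G : ℕ → Set E)
    (hpart : ∀ e : E, ∃! i : ℕ, e ∈ K i)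
    (hGK : ∀ i, G i ⊆ K i) (hGfin : ∀ i, (G i).Finite)
    (hb : ∀ {g g' : E} {i j : ℕ}, g < g' → g ∈ G i → g' ∈ G j → i < j)
    (hc : ∀ e : E, {f : E | f < e}.Finite)
    (hcontemp : ∀ e f : E, e ≤ f → f ≤ e → e ≠ f → ∃ i, e ∈ G i ∧ f ∈ G i) :
    ∃ t : E → ℝ,
      (∀ e f : E, e < f → t e < t f) ∧
      (∀ e f : E, e ≤ f → f ≤ e → t e = t f) ∧
      (∀ i : ℕ, ∀ g ∈ G i, t g = (i : ℝ)) ∧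
      (∀ r : ℝ, {e : E | t e < r}.Finite) := by
  let v : E → ℕ := fun e => (hpart e).exists.choose
  have hv : ∀ i, ∀ g ∈ G i, v g = i := fun i g hg =>
    (hpart g).unique (hpart g).exists.choose_spec (hGK i hg)
  obtain ⟨w, hw, hvw, hwfin⟩ := exists_strictMono_nat_ge_finite_sublevels hc v
  refine ⟨timestamp G v w, timestamp_strictMono hb hw hvw hv, fun e f hef hfe => ?_,
    fun i g hg => timestamp_of_mem hv hg, finite_timestamp_lt hGfin hc hwfin⟩
  obtain rfl | hne := eq_or_ne e f
  · rfl
  · obtain ⟨i, he, hf⟩ := hcontemp e f hef hfe hne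
    rw [timestamp_of_mem hv he, timestamp_of_mem hv hf]

/-- Existence of a timeline: for a countable set of events, preordered (so that
contemporaneous events are allowed), partitioned into view classes `K i` with
distinguished finite subsets `G i ⊆ K i` such that (a) the order respects views,
(b) strict relations between distinguished events have strictly increasing views,
(c) the order is very well founded, and contemporaneous pairs lie within a single `G i`,
there is a timestamp function `t : E → ℝ` respecting the strict order, giving every
event of `G i` the timestamp `i`, and such that only finitely many events occur
before any given real time. -/
theorem timeline_exists {E : Type*} [Countable E] [Preorder E]
    (K G : ℕ → Set E)
    (hpart : ∀ e : E, ∃! i : ℕ, e ∈ K i)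
    (hGK : ∀ i, G i ⊆ K i) (hGfin : ∀ i, (G i).Finite)
    (ha : ∀ {e f : E} {i j : ℕ}, e ≤ f → e ∈ K i → f ∈ K j → i ≤ j)
    (hb : ∀ {g g' : E} {i j : ℕ}, g < g' → g ∈ G i → g' ∈ G j → i < j)
    (hc : ∀ e : E, {f : E | f < e}.Finite)
    (hcontemp : ∀ e f : E, e ≤ f → f ≤ e → e ≠ f → ∃ i, e ∈ G i ∧ f ∈ G i) :
    ∃ t : E → ℝ,
      (∀ e f : E, e < f → t e < t f) ∧
      (∀ e f : E, e ≤ f → f ≤ e → t e = t f) ∧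
      (∀ i : ℕ, ∀ g ∈ G i, t g = (i : ℝ)) ∧
      (∀ r : ℝ, {e : E | t e < r}.Finite) :=
  timeline_exists_general K G hpart hGK hGfin hb hc hcontemp
end

section
/- Let (E, ≼) be a partial order on events such that: every event occurs at one of finitely many processes per view interval, the events at each process are linearly ordered with each event having only finitely many predecessors at its own process, the order is the minimal order generated by per-process order together with finitely many 'send ≺ receive' cross-process relations each event having at most two immediate predecessors, and events are stratified by views so that any predecessor of an event of view i has view ≤ i while only finitely many processes have events of view ≤ i. Then ≼ is very well founded: every event has only finitely many predecessors in E. -/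
/-!
Below a fixed event `<` is well founded: the events below it lie on finitely many processes, and
on each process `<` is well founded because every event has finitely many predecessors there.
Mediation makes the reversed order strongly atomic, and each event covers at most two others, so
by König's lemma (in the reversed order) an infinite lower set would contain an infinite
descending chain of covers, contradicting well-foundedness.
-/

open Set OrderDual

theorem Set.isWF_of_forall_finite_lt {α : Type*} [Preorder α] {s : Set α}
    (h : ∀ x ∈ s, {y ∈ s | y < x}.Finite) : s.IsWF := by
  refine isWF_iff_no_descending_seq.2 fun f hf hfs => ?_
  have hsub : range (fun n => f (n + 1)) ⊆ {y ∈ s | y < f 0} := by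
    rintro _ ⟨n, rfl⟩
    exact ⟨hfs _, hf n.succ_pos⟩
  exact infinite_range_of_injective (hf.injective.comp (add_left_injective 1))
    |>.mono hsub (h _ (hfs 0))

theorem Set.Finite.isWF_biUnion {α ι : Type*} [Preorder α] {t : Set ι} (ht : t.Finite)
    {s : ι → Set α} (hs : ∀ i ∈ t, (s i).IsWF) : (⋃ i ∈ t, s i).IsWF := by
  induction t, ht using Set.Finite.induction_on with
  | empty => simp
  | insert _ _ ih =>
    rw [biUnion_insert]
    exact (hs _ (mem_insert _ _)).union (ih fun i hi => hs i (mem_insert_of_mem _ hi))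

theorem Set.IsWF.finite_Iic {α : Type*} [PartialOrder α] [IsStronglyAtomic αᵒᵈ]
    (hfin : ∀ a : α, {x | x ⋖ a}.Finite) {b : α} (hwf : (Iic b).IsWF) : (Iic b).Finite := by
  by_contra hinf
  obtain ⟨f, hf0, hf⟩ := exists_seq_covby_of_forall_covby_finite (α := αᵒᵈ)
    (fun a => ((hfin (ofDual a)).preimage ofDual.injective.injOn).subset
      fun _ => ofDual_covBy_ofDual_iff.2) (b := toDual b) (by rwa [Ici_toDual])
  have hanti : StrictAnti (fun n => ofDual (f n)) :=
    strictAnti_nat_of_succ_lt fun n => (hf n).lt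
  exact isWF_iff_no_descending_seq.1 hwf _ hanti fun n => by
    simpa [hf0] using hanti.antitone (Nat.zero_le n)

theorem events_very_well_founded_general {E P : Type*} [PartialOrder E] (proc : E → P)
    (hprocfin : ∀ e : E, {f : E | f < e ∧ proc f = proc e}.Finite)
    (himm : ∀ e : E, ∃ s : Finset E, s.card ≤ 2 ∧ ∀ f : E, f ⋖ e → f ∈ s)
    (hmed : ∀ e f : E, f < e → ∃ g : E, f ≤ g ∧ g ⋖ e)
    (hprocs : ∀ e : E, {p : P | ∃ f : E, f ≤ e ∧ proc f = p}.Finite) :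
    ∀ e : E, {f : E | f < e}.Finite := by
  intro e
  have : IsStronglyAtomic Eᵒᵈ := ⟨fun a b hab => by
    obtain ⟨g, hg, hge⟩ := hmed _ _ hab
    exact ⟨toDual g, hge.toDual, hg⟩⟩
  have hcov (a : E) : {x | x ⋖ a}.Finite := by
    obtain ⟨s, -, hs⟩ := himm a
    exact s.finite_toSet.subset hs
  have hfiber (p : P) : (proc ⁻¹' {p}).IsWF := isWF_of_forall_finite_lt fun x hx =>
    (hprocfin x).subset fun y ⟨hy, hyx⟩ => ⟨hyx, hy.trans hx.symm⟩
  have hwf : (Iic e).IsWF := ((hprocs e).isWF_biUnion fun p _ => hfiber p).mono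
    fun f hf => mem_biUnion ⟨f, hf, rfl⟩ rfl
  exact (hwf.finite_Iic hcov).subset fun _ => le_of_lt

/-- Abstract form of the very-well-foundedness corollary: a partial order on events in
which (1) events at each process are linearly ordered, with each event having only
finitely many predecessors at its own process, (2) each event has at most two immediate
predecessors, (3) every strict predecessor is mediated by an immediate predecessor, and
(4) all the predecessors of a fixed event lie on finitely many processes, is very well
founded: every event has only finitely many predecessors. -/
theorem events_very_well_founded {E P : Type*} [PartialOrder E] (proc : E → P)
    (hlin : ∀ e f : E, proc e = proc f → e ≤ f ∨ f ≤ e)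
    (hprocfin : ∀ e : E, {f : E | f < e ∧ proc f = proc e}.Finite)
    (himm : ∀ e : E, ∃ s : Finset E, s.card ≤ 2 ∧ ∀ f : E, f ⋖ e → f ∈ s)
    (hmed : ∀ e f : E, f < e → ∃ g : E, f ≤ g ∧ g ⋖ e)
    (hprocs : ∀ e : E, {p : P | ∃ f : E, f ≤ e ∧ proc f = p}.Finite) :
    ∀ e : E, {f : E | f < e}.Finite :=
  events_very_well_founded_general proc hprocfin himm hmed hprocs
end

section
/- In a conforming history, if a packet k on channel from process P to process Q is dropped (sent but never received), then P halts or Q halts. -/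
/-! A dropped packet `k` blocks its channel: by FIFO no packet queued after `k` on the channel
is ever dequeued, so every dequeued packet of the channel is queued before `k`, and by Order
Foundation there are only finitely many of those. The channel is therefore finite, and the
conforming axioms make its source removed (hence halted) or its target halted. -/

section

variable {Proc Packet Event : Type*} [PartialOrder Event]
  (src tgt : Packet → Proc) (send : Packet → Event) (recv : Packet → Option Event)

theorem send_lt_of_isSome_recv_of_dropped
    (hlin : ∀ k k' : Packet, src k = src k' → send k ≤ send k' ∨ send k' ≤ send k)
    (hinj : ∀ k k' : Packet, src k = src k' → tgt k = tgt k' → send k = send k' → k = k')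
    (fifo : ∀ k k' : Packet, src k = src k' → tgt k = tgt k' →
        send k < send k' → (recv k').isSome → (recv k).isSome)
    {k k' : Packet} (hs : src k' = src k) (ht : tgt k' = tgt k)
    (hdrop : recv k = none) (hrecv : (recv k').isSome) :
    send k' < send k := by
  have hne : k' ≠ k := by
    rintro rfl
    simp [hdrop] at hrecv
  rcases hlin k' k hs with hle | hge
  · exact hle.lt_of_ne fun heq => hne (hinj k' k hs ht heq)
  · rcases hge.lt_or_eq with hlt | heq
    · simpa [hdrop] using fifo k k' hs.symm ht.symm hlt hrecv
    · exact absurd (hinj k k' hs.symm ht.symm heq).symm hne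

theorem finite_received_of_dropped
    (hlin : ∀ k k' : Packet, src k = src k' → send k ≤ send k' ∨ send k' ≤ send k)
    (hinj : ∀ k k' : Packet, src k = src k' → tgt k = tgt k' → send k = send k' → k = k')
    (fifo : ∀ k k' : Packet, src k = src k' → tgt k = tgt k' →
        send k < send k' → (recv k').isSome → (recv k).isSome)
    (foundation : ∀ k : Packet, {k' : Packet | src k' = src k ∧ send k' < send k}.Finite)
    {k : Packet} (hdrop : recv k = none) :
    {k' : Packet | src k' = src k ∧ tgt k' = tgt k ∧ (recv k').isSome}.Finite :=
  (foundation k).subset fun _ ⟨hs, ht, hrecv⟩ =>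
    ⟨hs, send_lt_of_isSome_recv_of_dropped src tgt send recv hlin hinj fifo hs ht hdrop hrecv⟩

end

theorem dropped_packet_implies_halt_general
    {Proc Packet Event : Type*} [PartialOrder Event]
    (src tgt : Packet → Proc)
    (send : Packet → Event)
    (recv : Packet → Option Event)
    (halts removed : Proc → Prop)
    -- events at a process are linearly ordered
    (hlin : ∀ k k' : Packet, src k = src k' → send k ≤ send k' ∨ send k' ≤ send k)
    -- no two packets of one multicast belong to the same channel
    (hinj : ∀ k k' : Packet, src k = src k' → tgt k = tgt k' → send k = send k' → k = k')
    -- Packet Order Axiom: channels are FIFO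
    (fifo : ∀ k k' : Packet, src k = src k' → tgt k = tgt k' →
        send k < send k' → (recv k').isSome → (recv k).isSome)
    -- Order Foundation Axiom: only finitely many packets are queued before a given one
    (foundation : ∀ k : Packet, {k' : Packet | src k' = src k ∧ send k' < send k}.Finite)
    -- Conforming Channel Axiom
    (confChannel : ∀ P Q : Proc,
        {k : Packet | src k = P ∧ tgt k = Q ∧ (recv k).isSome}.Finite →
        removed P ∨ halts Q)
    -- Conforming Halt Axiom
    (confHalt : ∀ P : Proc, removed P → halts P)
    (k : Packet) (hdrop : recv k = none) :
    halts (src k) ∨ halts (tgt k) :=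
  (confChannel (src k) (tgt k)
    (finite_received_of_dropped src tgt send recv hlin hinj fifo foundation hdrop)).imp_left
    (confHalt (src k))

/-- In a conforming history, if a packet `k` on the channel from process `src k` to
process `tgt k` is dropped (sent but never received, hence never dequeued), then the
source process halts or the target process halts.  The hypotheses are the relevant model
axioms: channels are FIFO, send events at a process are linearly ordered and very well
founded, no two packets of a multicast share a channel, a dropped packet has no
dequeuing event, the Conforming Channel Axiom (a finite channel has a removed source or
a halting target), and the Conforming Halt Axiom (removed processes halt). -/
theorem dropped_packet_implies_halt
    {Proc Packet Event : Type*} [PartialOrder Event]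
    (src tgt : Packet → Proc)
    (send : Packet → Event)
    (recv : Packet → Option Event)
    (sent : Packet → Prop)
    (halts removed : Proc → Prop)
    -- events at a process are linearly ordered
    (hlin : ∀ k k' : Packet, src k = src k' → send k ≤ send k' ∨ send k' ≤ send k)
    -- no two packets of one multicast belong to the same channel
    (hinj : ∀ k k' : Packet, src k = src k' → tgt k = tgt k' → send k = send k' → k = k')
    -- Packet Order Axiom: channels are FIFO
    (fifo : ∀ k k' : Packet, src k = src k' → tgt k = tgt k' →
        send k < send k' → (recv k').isSome → (recv k).isSome)
    -- Order Foundation Axiom: only finitely many packets are queued before a given one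
    (foundation : ∀ k : Packet, {k' : Packet | src k' = src k ∧ send k' < send k}.Finite)
    -- Conforming Channel Axiom
    (confChannel : ∀ P Q : Proc,
        {k : Packet | src k = P ∧ tgt k = Q ∧ (recv k).isSome}.Finite →
        removed P ∨ halts Q)
    -- Conforming Halt Axiom
    (confHalt : ∀ P : Proc, removed P → halts P)
    (k : Packet) (hsent : sent k) (hdrop : recv k = none) :
    halts (src k) ∨ halts (tgt k) :=
  dropped_packet_implies_halt_general src tgt send recv halts removed hlin hinj fifo foundation
    confChannel confHalt k hdrop
end

section
/- In a non-stunted conforming history, a process halts if and only if it is removed from the group. -/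
/-!
If a halting process `P` were not removed, its view interval would end at `numview`, which is
finite because halting processes have finite view intervals; so there are finitely many
processes. `P` queues only finitely many packets, so each of its outgoing channels is finite,
and since `P` is not removed the Conforming Channel axiom makes every process halt: the history
would be stunted.
-/

theorem forall_halts_of_finite_sent_of_not_removed {Proc Packet : Type*} {removed : Prop}
    {halts : Proc → Prop} {src tgt : Packet → Proc} {recvExists : Packet → Prop} {P : Proc}
    (hsent : {k : Packet | src k = P}.Finite)
    (hchannel : ∀ Q : Proc,
      {k : Packet | src k = P ∧ tgt k = Q ∧ recvExists k}.Finite → removed ∨ halts Q)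
    (hP : ¬ removed) (Q : Proc) : halts Q :=
  (hchannel Q (hsent.subset fun _ hk => hk.1)).resolve_left hP

theorem halts_iff_removed_general
    {Proc Packet : Type*}
    (numview : ℕ∞) (r : Proc → ℕ∞)
    (halts : Proc → Prop)
    (src tgt : Packet → Proc)
    (recvExists : Packet → Prop)
    (hr : ∀ P : Proc, r P ≤ numview)
    -- if there are finitely many views then there are finitely many processes
    (hfinProc : numview < ⊤ → Finite Proc)
    -- Conforming Halt Axiom
    (confHalt : ∀ P : Proc, r P < numview → halts P)
    -- Conforming GMS Axiom: a halting process has a finite view interval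
    (confGMS : ∀ P : Proc, halts P → r P < ⊤)
    -- First Halting Axiom: a halting process has a finite event set,
    -- hence queues only finitely many packets
    (firstHalting : ∀ P : Proc, halts P → {k : Packet | src k = P}.Finite)
    -- Conforming Channel Axiom
    (confChannel : ∀ P Q : Proc,
        {k : Packet | src k = P ∧ tgt k = Q ∧ recvExists k}.Finite →
        r P < numview ∨ halts Q)
    -- the history is not stunted
    (hnonstunted : ¬ ((Set.univ : Set Proc).Finite ∧ ∀ P : Proc, halts P)) :
    ∀ P : Proc, halts P ↔ r P < numview := by
  intro P
  refine ⟨fun hP => ?_, confHalt P⟩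
  by_contra hkept
  have hrP : r P = numview := (hr P).antisymm (not_lt.mp hkept)
  have : Finite Proc := hfinProc (hrP ▸ confGMS P hP)
  exact hnonstunted ⟨Set.finite_univ,
    forall_halts_of_finite_sent_of_not_removed (firstHalting P hP) (confChannel P) hkept⟩

/-- In a non-stunted conforming history, a process halts if and only if it is removed
from the group.  Here each process `P` has a view interval `[j P, r P)` inside the view
interval `[0, numview)`; `P` is removed iff `r P < numview`; the history is stunted if it
has finitely many processes all of which halt.  The hypotheses are the conforming axioms
used: removed processes halt, halting processes have a finite view interval, a finite
channel has a removed source or a halting target, and a halting process queues only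
finitely many packets. -/
theorem halts_iff_removed
    {Proc Packet : Type*}
    (numview : ℕ∞) (j r : Proc → ℕ∞)
    (halts : Proc → Prop)
    (src tgt : Packet → Proc)
    (recvExists : Packet → Prop)
    (hr : ∀ P : Proc, r P ≤ numview)
    -- if there are finitely many views then there are finitely many processes
    (hfinProc : numview < ⊤ → Finite Proc)
    -- Conforming Halt Axiom
    (confHalt : ∀ P : Proc, r P < numview → halts P)
    -- Conforming GMS Axiom: a halting process has a finite view interval
    (confGMS : ∀ P : Proc, halts P → r P < ⊤)
    -- First Halting Axiom: a halting process has a finite event set,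
    -- hence queues only finitely many packets
    (firstHalting : ∀ P : Proc, halts P → {k : Packet | src k = P}.Finite)
    -- Conforming Channel Axiom
    (confChannel : ∀ P Q : Proc,
        {k : Packet | src k = P ∧ tgt k = Q ∧ recvExists k}.Finite →
        r P < numview ∨ halts Q)
    -- the history is not stunted
    (hnonstunted : ¬ ((Set.univ : Set Proc).Finite ∧ ∀ P : Proc, halts P)) :
    ∀ P : Proc, halts P ↔ r P < numview :=
  halts_iff_removed_general numview r halts src tgt recvExists hr hfinProc confHalt confGMS
    firstHalting confChannel hnonstunted
end

section
/- In a join-free transactional history of CBCAST, along any effective route R₀ → R₁ → ⋯ → R_k = T of a message n from its originator R₀ to a process T, every intermediate process Rᵢ is a member of the message's view mview(n), and the removal views are strictly increasing: r(R₀) < r(R₁) < ⋯ < r(R_{k−1}). -/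
namespace List

variable {α : Type*} {r s : α → α → Prop}

theorem IsChain.forall_mem_of_rel_imp {p : α → Prop} (hp : ∀ a b, r a b → p a ∧ p b) :
    ∀ {l : List α}, l.IsChain r → 2 ≤ l.length → ∀ x ∈ l, p x
  | [a, b], h, _, x, hx => by
    have hab := hp a b (isChain_pair.mp h)
    simp only [mem_cons, not_mem_nil, or_false] at hx
    rcases hx with rfl | rfl
    exacts [hab.1, hab.2]
  | a :: b :: c :: t, h, _, x, hx => by
    rw [isChain_cons_cons] at h
    rcases mem_cons.mp hx with rfl | hx
    · exact (hp _ b h.1).1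
    · exact h.2.forall_mem_of_rel_imp hp (by simp) x hx

theorem IsChain.dropLast_of_rel_rel (hs : ∀ a b c, r a b → r b c → s a b) :
    ∀ {l : List α}, l.IsChain r → l.dropLast.IsChain s
  | [], _ | [_], _ | [_, _], _ => by simp
  | a :: b :: c :: t, h => by
    rw [isChain_cons_cons] at h
    have ih := h.2.dropLast_of_rel_rel hs
    rw [dropLast_cons_cons] at ih ⊢
    exact isChain_cons_cons.mpr ⟨hs a b c h.1 (isChain_cons_cons.mp h.2).1, ih⟩

end List

theorem effective_route_death_views_general
    {Proc Msg : Type*}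
    (rv : Proc → ℕ∞) (mview : Msg → ℕ)
    (effSend : Msg → Proc → Proc → Prop)
    (hmem : ∀ (n : Msg) (P Q : Proc), effSend n P Q →
        (mview n : ℕ∞) < rv P ∧ (mview n : ℕ∞) < rv Q)
    (hfwd : ∀ (n : Msg) (P Q R : Proc), effSend n P Q → effSend n Q R → rv P < rv Q)
    (n : Msg) (l : List Proc)
    (hlen : 2 ≤ l.length)
    (hchain : l.Chain' (effSend n)) :
    (∀ R ∈ l, (mview n : ℕ∞) < rv R) ∧
      ∀ (i j : ℕ) (hi : i < l.length) (hj : j < l.length),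
        i < j → j < l.length - 1 → rv (l.get ⟨i, hi⟩) < rv (l.get ⟨j, hj⟩) := by
  refine ⟨hchain.forall_mem_of_rel_imp (hmem n) hlen, fun i j hi hj hij hjl => ?_⟩
  have hsenders : (l.dropLast.map rv).Pairwise (· < ·) :=
    ((List.isChain_map rv).mpr (hchain.dropLast_of_rel_rel (hfwd n))).pairwise
  have hlt := List.pairwise_iff_getElem.mp hsenders i j
    (by rw [List.length_map, List.length_dropLast]; omega)
    (by rw [List.length_map, List.length_dropLast]; omega) hij
  simpa only [List.get_eq_getElem, List.getElem_map, List.getElem_dropLast] using hlt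

/-- **Effective routes and removal views** (join-free transactional CBCAST history):
along any effective route `R₀ → R₁ → ⋯ → R_k = T` of a message `n` from its originator
`R₀ = orig n` to a process `T`, every process on the route is a member of the message
view `mview n` (its removal view exceeds `mview n`), and the removal views are strictly
increasing along the route excluding the final process:
`rv R₀ < rv R₁ < ⋯ < rv R_{k-1}`.  The hypotheses transcribe the protocol rules:
messages are broadcast and forwarded only among members of the message view, and
forwarding is triggered exactly by the removal notification of the previous effective
sender. -/
theorem effective_route_death_views
    {Proc Msg : Type*}
    (rv : Proc → ℕ∞) (mview : Msg → ℕ) (orig : Msg → Proc)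
    (effSend : Msg → Proc → Proc → Prop)
    (hmem : ∀ (n : Msg) (P Q : Proc), effSend n P Q →
        (mview n : ℕ∞) < rv P ∧ (mview n : ℕ∞) < rv Q)
    (hfwd : ∀ (n : Msg) (P Q R : Proc), effSend n P Q → effSend n Q R → rv P < rv Q)
    (n : Msg) (l : List Proc) (T : Proc)
    (hlen : 2 ≤ l.length)
    (hhead : l.head? = some (orig n))
    (hlast : l.getLast? = some T)
    (hchain : l.Chain' (effSend n)) :
    (∀ R ∈ l, (mview n : ℕ∞) < rv R) ∧
      ∀ (i j : ℕ) (hi : i < l.length) (hj : j < l.length),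
        i < j → j < l.length - 1 → rv (l.get ⟨i, hi⟩) < rv (l.get ⟨j, hj⟩) :=
  effective_route_death_views_general rv mview effSend hmem hfwd n l hlen hchain
end
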